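/- Let c ∈ ℝ and define ν₂(t) = c for all t. Then for every x > 0, the boundary expression (1/Γ(1/2)²)·∫₀ˣ ν₂(t)·t^{−1/2}(x−t)^{−1/2}·ln(t/x) dt equals −2c·ln 2. -/

import Mathlib

/-!
Scaling `t = x u` turns the integral into `c ∫₀¹ u^(-1/2) (1-u)^(-1/2) log u du`, and the
substitution `u = sin² θ` turns the latter into `4 ∫₀^(π/2) log (sin θ) dθ = -2π log 2`.
Dividing by `Γ(1/2)² = π` gives `-2 c log 2`.
-/

open MeasureTheory Set Real

lemma rpow_neg_one_half_sq {a : ℝ} (ha : 0 < a) : (a ^ 2) ^ (-(1:ℝ)/2) = a⁻¹ := by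
  rw [← rpow_natCast, ← rpow_mul ha.le]
  norm_num [rpow_neg_one]

lemma integral_arcsine_weight_comp_div {x : ℝ} (hx : 0 < x) (f : ℝ → ℝ) :
    ∫ t in (0:ℝ)..x, t ^ (-(1:ℝ)/2) * (x - t) ^ (-(1:ℝ)/2) * f (t / x)
      = ∫ u in (0:ℝ)..1, u ^ (-(1:ℝ)/2) * (1 - u) ^ (-(1:ℝ)/2) * f u := by
  have hscale : ∀ u ∈ uIcc (0:ℝ) 1,
      x * ((x * u) ^ (-(1:ℝ)/2) * (x - x * u) ^ (-(1:ℝ)/2) * f (x * u / x))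
        = u ^ (-(1:ℝ)/2) * (1 - u) ^ (-(1:ℝ)/2) * f u := by
    intro u hu
    rw [uIcc_of_le zero_le_one] at hu
    have hxx : x * (x ^ (-(1:ℝ)/2) * x ^ (-(1:ℝ)/2)) = 1 := by
      rw [← rpow_add hx]; norm_num [rpow_neg_one, hx.ne']
    rw [show x - x * u = x * (1 - u) by ring, mul_rpow hx.le hu.1,
      mul_rpow hx.le (by linarith [hu.2]), mul_div_cancel_left₀ _ hx.ne']
    linear_combination (u ^ (-(1:ℝ)/2) * (1 - u) ^ (-(1:ℝ)/2) * f u) * hxx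
  rw [← intervalIntegral.integral_congr hscale, intervalIntegral.integral_const_mul,
    ← smul_eq_mul, intervalIntegral.smul_integral_comp_mul_left
      (fun t => t ^ (-(1:ℝ)/2) * (x - t) ^ (-(1:ℝ)/2) * f (t / x)), mul_zero, mul_one]

lemma sin_pos_of_mem_Ioo_zero_pi_div_two {θ : ℝ} (hθ : θ ∈ Ioo 0 (π / 2)) : 0 < sin θ :=
  sin_pos_of_pos_of_lt_pi hθ.1 (by linarith [hθ.2, pi_pos])

lemma cos_pos_of_mem_Ioo_zero_pi_div_two {θ : ℝ} (hθ : θ ∈ Ioo 0 (π / 2)) : 0 < cos θ :=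
  cos_pos_of_mem_Ioo ⟨by linarith [hθ.1, pi_pos], hθ.2⟩

lemma sin_sq_mem_Ioo_zero_one {θ : ℝ} (hθ : θ ∈ Ioo 0 (π / 2)) : sin θ ^ 2 ∈ Ioo (0:ℝ) 1 := by
  have hsin := sin_pos_of_mem_Ioo_zero_pi_div_two hθ
  have hcos := cos_pos_of_mem_Ioo_zero_pi_div_two hθ
  exact ⟨by positivity, by nlinarith [sin_sq_add_cos_sq θ]⟩

lemma image_sin_sq_Ioo : (fun θ => sin θ ^ 2) '' Ioo 0 (π / 2) = Ioo (0:ℝ) 1 := by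
  refine Subset.antisymm (image_subset_iff.2 fun θ hθ => sin_sq_mem_Ioo_zero_one hθ) ?_
  rintro u ⟨hu0, hu1⟩
  have hsqrt : √u < 1 := (sqrt_lt' one_pos).2 (by simpa using hu1)
  refine ⟨arcsin √u, ⟨arcsin_pos.2 (sqrt_pos.2 hu0), arcsin_lt_pi_div_two.2 hsqrt⟩, ?_⟩
  simp only [sin_arcsin (by linarith [sqrt_nonneg u]) hsqrt.le, sq_sqrt hu0.le]

lemma injOn_sin_sq_Ioo : InjOn (fun θ => sin θ ^ 2) (Ioo 0 (π / 2)) := by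
  intro a ha b hb hab
  have hIcc : Ioo 0 (π / 2) ⊆ Icc (-(π / 2)) (π / 2) := fun θ hθ =>
    ⟨by linarith [hθ.1, pi_pos], hθ.2.le⟩
  exact injOn_sin (hIcc ha) (hIcc hb) ((sq_eq_sq₀ (sin_pos_of_mem_Ioo_zero_pi_div_two ha).le
    (sin_pos_of_mem_Ioo_zero_pi_div_two hb).le).1 hab)

lemma setIntegral_Ioo_zero_one_eq_sin_sq {E : Type*} [NormedAddCommGroup E] [NormedSpace ℝ E]
    (g : ℝ → E) :
    ∫ u in Ioo (0:ℝ) 1, g u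
      = ∫ θ in Ioo 0 (π / 2), |2 * sin θ * cos θ| • g (sin θ ^ 2) := by
  rw [← image_sin_sq_Ioo]
  exact integral_image_eq_integral_abs_deriv_smul measurableSet_Ioo
    (fun θ _ => by simpa using ((hasDerivAt_sin θ).fun_pow 2).hasDerivWithinAt) injOn_sin_sq_Ioo g

lemma integral_arcsine_weight_mul_log :
    ∫ u in (0:ℝ)..1, u ^ (-(1:ℝ)/2) * (1 - u) ^ (-(1:ℝ)/2) * log u = -2 * π * log 2 := by
  have hsubst : ∀ θ ∈ Ioo 0 (π / 2),
      |2 * sin θ * cos θ| • ((sin θ ^ 2) ^ (-(1:ℝ)/2) * (1 - sin θ ^ 2) ^ (-(1:ℝ)/2)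
        * log (sin θ ^ 2)) = 4 * log (sin θ) := by
    intro θ hθ
    have hsin := sin_pos_of_mem_Ioo_zero_pi_div_two hθ
    have hcos := cos_pos_of_mem_Ioo_zero_pi_div_two hθ
    rw [← cos_sq', rpow_neg_one_half_sq hsin, rpow_neg_one_half_sq hcos, log_pow,
      smul_eq_mul, abs_of_pos (by positivity)]
    field_simp
    ring
  rw [intervalIntegral.integral_of_le zero_le_one, integral_Ioc_eq_integral_Ioo,
    setIntegral_Ioo_zero_one_eq_sin_sq, setIntegral_congr_fun measurableSet_Ioo hsubst,
    integral_const_mul, ← integral_Ioc_eq_integral_Ioo,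
    ← intervalIntegral.integral_of_le (by positivity), integral_log_sin_zero_pi_div_two]
  ring

theorem stmt18 (c : ℝ) (x : ℝ) (hx : 0 < x) :
    (1 / Real.Gamma (1/2) ^ 2) *
      (∫ t in (0:ℝ)..x, c * t ^ (-(1:ℝ)/2) * (x - t) ^ (-(1:ℝ)/2) * Real.log (t / x))
      = -2 * c * Real.log 2 := by
  have hfactor : (fun t => c * t ^ (-(1:ℝ)/2) * (x - t) ^ (-(1:ℝ)/2) * log (t / x))
      = fun t => c * (t ^ (-(1:ℝ)/2) * (x - t) ^ (-(1:ℝ)/2) * log (t / x)) := by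
    funext t; ring
  rw [hfactor, intervalIntegral.integral_const_mul, integral_arcsine_weight_comp_div hx,
    integral_arcsine_weight_mul_log, Gamma_one_half_eq, sq_sqrt pi_pos.le]
  field_simp
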